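/- Consider the dissipative Hamiltonian operator pencil P(λ) = λE − BQ. The following three conditions are equivalent: (a) there exists λ0 ∈ ℂ such that λ0E − BQ : D(BQ) → Y is bijective with bounded inverse, and B is maximally dissipative; (b) for every λ0 ∈ ℂ with Re λ0 > 0 the operator λ0E − BQ : D(BQ) → Y is bijective with bounded inverse; (c) there exists λ0 ∈ ℂ with Re λ0 > 0 such that λ0E − BQ : D(BQ) → Y is bijective with bounded inverse. -/

import Mathlib

/-!
With `G = E Q⁻¹`, which is positive because `Q*E` is, `λE - BQ = (λG - B) Q`, so everything
reduces to the pencil `λG - B` on `D(B)`. Two estimates drive the argument: for `Re λ > 0`,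
`Re ⟪(λG - B) u, u⟫ ≥ Re λ ⟪G u, u⟫`, and `‖G u‖² ≤ ‖G‖ ⟪G u, u⟫`.

If `λG - B` is onto for some `Re λ > 0` and `B'` is a dissipative extension of `B`, every
`w ∈ D(B')` splits as `u + v` with `u ∈ D(B)` and `B'v = λGv`; the estimates force `Gv = 0`,
then `B'v = 0`; dissipativity of `B'` makes `v` orthogonal to `B (D(B))`, hence to the range
of `λG - B`, so `v = 0`.

Conversely, if `μG - B` has a bounded inverse `R`, then `λG - B = K (μG - B)` with the bounded
operator `K = 1 + (λ - μ) G R`. For `Re λ > 0` the estimates bound `K` below, and a vector `v`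
orthogonal to its range either lies in `D(B)`, where the estimates kill it, or yields the
dissipative extension of `B` by `v ↦ -λ̄ G v`, which maximality forbids. Hence `K` is
invertible.
-/

open Filter Topology
open scoped InnerProductSpace

noncomputable section

variable {X Y : Type*}
  [NormedAddCommGroup X] [InnerProductSpace ℂ X] [CompleteSpace X]
  [NormedAddCommGroup Y] [InnerProductSpace ℂ Y] [CompleteSpace Y]

/-- Application of the composition `BQ` (with domain `{x | Qx ∈ D(B)})`,
extended by `0` outside the domain. -/
noncomputable def BQap (Q : X →L[ℂ] Y) (B : Y →ₗ.[ℂ] Y) (x : X) : Y :=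
  haveI := Classical.dec (Q x ∈ B.domain)
  if h : Q x ∈ B.domain then B ⟨Q x, h⟩ else 0

/-- `B` is a dissipative operator in `Y`: `Re ⟨By, y⟩ ≤ 0` for all `y ∈ D(B)`. -/
def Dissipative (B : Y →ₗ.[ℂ] Y) : Prop :=
  ∀ y : B.domain, (⟪B y, (y : Y)⟫_ℂ).re ≤ 0

/-- `B` is maximally dissipative: it is dissipative and every dissipative extension of
`B` has the same domain. -/
def MaxDissipative (B : Y →ₗ.[ℂ] Y) : Prop :=
  Dissipative B ∧
  ∀ B' : Y →ₗ.[ℂ] Y, Dissipative B' →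
    (B.domain : Set Y) ⊆ (B'.domain : Set Y) →
    (∀ (y : Y) (hy : y ∈ B.domain) (hy' : y ∈ B'.domain), B ⟨y, hy⟩ = B' ⟨y, hy'⟩) →
    B'.domain = B.domain

/-- `lam` is a regular point of the pencil `P(λ) = λE - BQ`: the operator
`λE - BQ : D(BQ) → Y` is bijective with bounded inverse. -/
def RegAt (E Q : X →L[ℂ] Y) (B : Y →ₗ.[ℂ] Y) (lam : ℂ) : Prop :=
  ∃ T : Y →L[ℂ] X,
    (∀ v : X, Q v ∈ B.domain → T (lam • E v - BQap Q B v) = v) ∧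
    (∀ y : Y, Q (T y) ∈ B.domain ∧ lam • E (T y) - BQap Q B (T y) = y)

open scoped ComplexConjugate

theorem le_mul_of_le_add_of_mul_sq_le {t F h d k a : ℝ} (ha : 0 < a) (hF : 0 ≤ F) (hk : 0 ≤ k)
    (hlin : t ≤ F + d * h) (hsq : a * h ^ 2 ≤ k * F * t) :
    t ≤ (2 + d ^ 2 * k / a) * F := by
  have hK : 0 ≤ d ^ 2 * k / a := by positivity
  rcases le_or_gt t F with htF | htF
  · nlinarith [mul_nonneg hK hF]
  have hdh : (t - F) ^ 2 ≤ d ^ 2 * k / a * F * t := by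
    rw [div_mul_eq_mul_div, div_mul_eq_mul_div, le_div_iff₀ ha]
    have hsq' : (t - F) ^ 2 ≤ (d * h) ^ 2 := pow_le_pow_left₀ (by linarith) (by linarith) 2
    nlinarith [mul_le_mul_of_nonneg_right hsq' ha.le, mul_le_mul_of_nonneg_left hsq (sq_nonneg d)]
  have ht : 0 < t := by linarith
  nlinarith

theorem Complex.eq_zero_of_forall_re_mul_le {z : ℂ} {c : ℝ} (h : ∀ s : ℂ, (s * z).re ≤ c) :
    z = 0 := by
  by_contra hz
  have := h ((c + 1) * z⁻¹)
  rw [mul_assoc, inv_mul_cancel₀ hz, mul_one] at this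
  norm_num at this

namespace ContinuousLinearMap

variable {𝕜 E : Type*} [RCLike 𝕜] [NormedAddCommGroup E] [InnerProductSpace 𝕜 E]

theorem IsPositive.norm_apply_sq_le {T : E →L[𝕜] E} (hT : T.IsPositive) (x : E) :
    ‖T x‖ ^ 2 ≤ ‖T‖ * RCLike.re ⟪T x, x⟫_𝕜 := by
  set a := RCLike.re ⟪T (T x), T x⟫_𝕜
  set c := RCLike.re ⟪T x, x⟫_𝕜
  have hquad : ∀ s : ℝ, 0 ≤ a * (s * s) + 2 * ‖T x‖ ^ 2 * s + c := by
    intro s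
    have := hT.re_inner_nonneg_left (x + (s : 𝕜) • T x)
    have hsym : ⟪T (T x), x⟫_𝕜 = ⟪T x, T x⟫_𝕜 := hT.isSymmetric _ _
    simp only [map_add, map_smul, inner_add_left, inner_add_right, inner_smul_left,
      inner_smul_right, hsym, inner_self_eq_norm_sq_to_K, RCLike.conj_ofReal] at this
    simp only [map_add, RCLike.re_ofReal_mul, ← RCLike.ofReal_pow, RCLike.ofReal_re] at this
    nlinarith
  have hdisc : (2 * ‖T x‖ ^ 2) ^ 2 ≤ 4 * a * c := by
    simpa [discrim, sub_nonpos] using discrim_le_zero hquad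
  have ha : a ≤ ‖T‖ * ‖T x‖ ^ 2 := by
    calc a ≤ ‖⟪T (T x), T x⟫_𝕜‖ := RCLike.re_le_norm _
      _ ≤ ‖T (T x)‖ * ‖T x‖ := norm_inner_le_norm _ _
      _ ≤ ‖T‖ * ‖T x‖ * ‖T x‖ := by gcongr; exact T.le_opNorm _
      _ = ‖T‖ * ‖T x‖ ^ 2 := by ring
  rcases (sq_nonneg ‖T x‖).eq_or_lt with h0 | hpos
  · rw [← h0]; exact mul_nonneg (norm_nonneg _) (hT.re_inner_nonneg_left x)
  · nlinarith [hT.re_inner_nonneg_left x]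

theorem IsPositive.apply_eq_zero_of_re_inner_le_zero {T : E →L[𝕜] E} (hT : T.IsPositive) {x : E}
    (hx : RCLike.re ⟪T x, x⟫_𝕜 ≤ 0) : T x = 0 := by
  have := hT.norm_apply_sq_le x
  have : ‖T x‖ ^ 2 ≤ 0 := this.trans (mul_nonpos_of_nonneg_of_nonpos (norm_nonneg _) hx)
  simpa using this

end ContinuousLinearMap

section Pencil

variable {H : Type*} [NormedAddCommGroup H] [InnerProductSpace ℂ H]
  {G : H →L[ℂ] H} {B : H →ₗ.[ℂ] H}

def pencil (G : H →L[ℂ] H) (B : H →ₗ.[ℂ] H) (lam : ℂ) : B.domain →ₗ[ℂ] H :=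
  lam • ((G : H →ₗ[ℂ] H) ∘ₗ B.domain.subtype) - B.toFun

@[simp]
theorem pencil_apply (lam : ℂ) (u : B.domain) : pencil G B lam u = lam • G u - B u := rfl

theorem pencil_apply_eq_add (lam mu : ℂ) (u : B.domain) :
    pencil G B lam u = pencil G B mu u + (lam - mu) • G u := by
  simp only [pencil_apply, sub_smul]
  abel

theorem inner_pencil_left (hG : G.IsPositive) (lam : ℂ) (u : B.domain) (v : H) :
    ⟪pencil G B lam u, v⟫_ℂ = conj lam * ⟪(u : H), G v⟫_ℂ - ⟪B u, v⟫_ℂ := by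
  rw [pencil_apply, inner_sub_left, inner_smul_left, hG.inner_left_eq_inner_right]

theorem eq_zero_of_apply_eq_zero_of_inner_eq_zero (hG : G.IsPositive) {lam : ℂ}
    (hsurj : Function.Surjective (pencil G B lam)) {v : H} (hGv : G v = 0)
    (hBv : ∀ u : B.domain, ⟪B u, v⟫_ℂ = 0) : v = 0 := by
  obtain ⟨u, hu⟩ := hsurj v
  have h := inner_pencil_left hG lam u v
  rw [hu, hGv, hBv] at h
  simpa using h

def IsRegularPoint (G : H →L[ℂ] H) (B : H →ₗ.[ℂ] H) (lam : ℂ) : Prop :=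
  ∃ S : H →L[ℂ] B.domain,
    Function.LeftInverse S (pencil G B lam) ∧ Function.RightInverse S (pencil G B lam)

theorem IsRegularPoint.of_isUnit_comp {lam mu : ℂ} (hmu : IsRegularPoint G B mu) {K : H →L[ℂ] H}
    (hK : IsUnit K) (hKP : ∀ u, K (pencil G B mu u) = pencil G B lam u) :
    IsRegularPoint G B lam := by
  obtain ⟨R, hRl, hRr⟩ := hmu
  obtain ⟨K, rfl⟩ := hK
  have hKl (y : H) : (↑K⁻¹ : H →L[ℂ] H) ((K : H →L[ℂ] H) y) = y :=
    DFunLike.congr_fun K.inv_mul y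
  have hKr (y : H) : (K : H →L[ℂ] H) ((↑K⁻¹ : H →L[ℂ] H) y) = y :=
    DFunLike.congr_fun K.mul_inv y
  refine ⟨R ∘L ↑K⁻¹, fun u => ?_, fun y => ?_⟩
  · rw [ContinuousLinearMap.comp_apply, ← hKP, hKl, hRl]
  · rw [ContinuousLinearMap.comp_apply, ← hKP, hRr, hKr]

theorem mul_re_inner_le_re_inner_pencil (hG : G.IsPositive) (hB : Dissipative B) (lam : ℂ)
    (u : B.domain) :
    lam.re * (⟪G u, (u : H)⟫_ℂ).re ≤ (⟪pencil G B lam u, (u : H)⟫_ℂ).re := by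
  have him : (⟪G u, (u : H)⟫_ℂ).im = 0 := (Complex.nonneg_iff.mp (hG.inner_nonneg_left u)).2.symm
  rw [pencil_apply, inner_sub_left, inner_smul_left, Complex.sub_re, Complex.mul_re,
    Complex.conj_re, him, mul_zero, sub_zero]
  linarith [hB u]

theorem apply_eq_zero_of_re_inner_pencil_nonpos (hG : G.IsPositive) (hB : Dissipative B)
    {lam : ℂ} (hlam : 0 < lam.re) {u : B.domain}
    (hu : (⟪pencil G B lam u, (u : H)⟫_ℂ).re ≤ 0) : G u = 0 := by
  refine hG.apply_eq_zero_of_re_inner_le_zero (nonpos_of_mul_nonpos_right ?_ hlam)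
  exact (mul_re_inner_le_re_inner_pencil hG hB lam u).trans hu

theorem Dissipative.inner_eq_zero_of_apply_eq_zero (hB : Dissipative B) {v : B.domain}
    (hv : B v = 0) (x : B.domain) : ⟪B x, (v : H)⟫_ℂ = 0 := by
  refine Complex.eq_zero_of_forall_re_mul_le (c := -(⟪B x, (x : H)⟫_ℂ).re) fun s => ?_
  have := hB (x + s • v)
  rw [LinearPMap.map_add, LinearPMap.map_smul, hv, smul_zero, add_zero, Submodule.coe_add,
    Submodule.coe_smul, inner_add_right, inner_smul_right, Complex.add_re] at this
  linarith

/-- The value `-λ̄ G v` is the one that makes the cross terms of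
`⟪B (y + c v), y + c v⟫` purely imaginary. -/
theorem dissipative_supSpanSingleton (hG : G.IsPositive) (hB : Dissipative B) {lam : ℂ}
    (hlam : 0 ≤ lam.re) {v : H} (hvB : v ∉ B.domain)
    (hv : ∀ u : B.domain, ⟪pencil G B lam u, v⟫_ℂ = 0) :
    Dissipative (B.supSpanSingleton v (-(conj lam • G v)) hvB) := by
  rintro ⟨x, hx⟩
  rw [LinearPMap.domain_supSpanSingleton] at hx
  obtain ⟨y, hy, _, hz, rfl⟩ := Submodule.mem_sup.mp hx
  obtain ⟨c, rfl⟩ := Submodule.mem_span_singleton.mp hz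
  have hBy : ⟪B ⟨y, hy⟩, v⟫_ℂ = conj lam * ⟪y, G v⟫_ℂ := by
    have := inner_pencil_left hG lam ⟨y, hy⟩ v
    rw [hv] at this
    exact (sub_eq_zero.mp this.symm).symm
  have hGy : ⟪G v, y⟫_ℂ = conj ⟪y, G v⟫_ℂ := (inner_conj_symm _ _).symm
  have hGv := Complex.nonneg_iff.mp (hG.inner_nonneg_left v)
  have hBdiss := hB ⟨y, hy⟩
  rw [LinearPMap.supSpanSingleton_apply_mk _ _ _ _ _ hy, RingHom.id_apply]
  simp only [inner_add_left, inner_add_right, inner_smul_left, inner_smul_right, inner_neg_left,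
    hBy, hGy, Complex.add_re, Complex.mul_re, Complex.neg_re, Complex.neg_im, Complex.mul_im,
    Complex.conj_re, Complex.conj_im, Complex.add_im] at hBdiss ⊢
  rw [← hGv.2]
  nlinarith [mul_nonneg (add_nonneg (mul_self_nonneg c.re) (mul_self_nonneg c.im))
    (mul_nonneg hlam hGv.1)]

theorem MaxDissipative.eq_zero_of_forall_inner_pencil_eq_zero (hG : G.IsPositive)
    (hmax : MaxDissipative B) {lam mu : ℂ} (hlam : 0 < lam.re)
    (hsurj : Function.Surjective (pencil G B mu)) {v : H}
    (hv : ∀ u : B.domain, ⟪pencil G B lam u, v⟫_ℂ = 0) : v = 0 := by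
  by_cases hvB : v ∈ B.domain
  · have hGv : G v = 0 :=
      apply_eq_zero_of_re_inner_pencil_nonpos (u := ⟨v, hvB⟩) hG hmax.1 hlam
        (congrArg Complex.re (hv ⟨v, hvB⟩)).le
    refine eq_zero_of_apply_eq_zero_of_inner_eq_zero hG hsurj hGv fun u => ?_
    have := hv u
    rwa [inner_pencil_left hG, hGv, inner_zero_right, mul_zero, zero_sub, neg_eq_zero] at this
  · have hext := hmax.2 _ (dissipative_supSpanSingleton hG hmax.1 hlam.le hvB hv)
      (by simp [LinearPMap.domain_supSpanSingleton])
      fun y hy hy' => (LinearPMap.supSpanSingleton_apply_of_mem B _ hvB ⟨y, hy'⟩ hy).symm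
    refine absurd ?_ hvB
    rw [← hext, LinearPMap.domain_supSpanSingleton]
    exact Submodule.mem_sup_right (Submodule.mem_span_singleton_self v)

theorem maxDissipative_of_surjective_pencil (hG : G.IsPositive) (hB : Dissipative B) {lam : ℂ}
    (hlam : 0 < lam.re) (hsurj : Function.Surjective (pencil G B lam)) : MaxDissipative B := by
  refine ⟨hB, fun B' hB' hsub hagree => le_antisymm (fun w hw => ?_) hsub⟩
  obtain ⟨u, hu⟩ := hsurj (pencil G B' lam ⟨w, hw⟩)
  set v : B'.domain := ⟨w, hw⟩ - ⟨u, hsub u.2⟩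
  have hpv : pencil G B' lam v = 0 := by
    rw [map_sub, ← hu, sub_eq_zero, pencil_apply, pencil_apply, hagree]
  have hGv : G v = 0 :=
    apply_eq_zero_of_re_inner_pencil_nonpos hG hB' hlam (by simp [hpv])
  have hB'v : B' v = 0 := by
    rwa [pencil_apply, hGv, smul_zero, zero_sub, neg_eq_zero] at hpv
  have hv : (v : H) = 0 := by
    refine eq_zero_of_apply_eq_zero_of_inner_eq_zero hG hsurj hGv fun x => ?_
    rw [hagree x x.2 (hsub x.2)]
    exact hB'.inner_eq_zero_of_apply_eq_zero hB'v _
  rw [show w = u from sub_eq_zero.mp hv]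
  exact u.2

theorem norm_le_mul_norm_pencil (hG : G.IsPositive) (hB : Dissipative B) {lam mu : ℂ}
    (hlam : 0 < lam.re) {R : H →L[ℂ] B.domain} (hR : ∀ y, pencil G B mu (R y) = y) (y : H) :
    ‖y‖ ≤ (2 + ‖lam - mu‖ ^ 2 * (‖G‖ * ‖R‖) / lam.re) * ‖pencil G B lam (R y)‖ := by
  set u := R y
  have hlin : ‖y‖ ≤ ‖pencil G B lam u‖ + ‖lam - mu‖ * ‖G u‖ := by
    have hy : y = pencil G B lam u - (lam - mu) • G u := by
      rw [pencil_apply_eq_add lam mu, hR, add_sub_cancel_right]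
    rw [hy, ← norm_smul]
    exact norm_sub_le _ _
  have hsq : lam.re * ‖G u‖ ^ 2 ≤ ‖G‖ * ‖R‖ * ‖pencil G B lam u‖ * ‖y‖ := by
    have hu : ‖(u : H)‖ ≤ ‖R‖ * ‖y‖ := R.le_opNorm y
    calc lam.re * ‖G u‖ ^ 2 ≤ lam.re * (‖G‖ * (⟪G u, (u : H)⟫_ℂ).re) :=
          mul_le_mul_of_nonneg_left (hG.norm_apply_sq_le _) hlam.le
      _ = ‖G‖ * (lam.re * (⟪G u, (u : H)⟫_ℂ).re) := by ring
      _ ≤ ‖G‖ * (⟪pencil G B lam u, (u : H)⟫_ℂ).re :=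
          mul_le_mul_of_nonneg_left (mul_re_inner_le_re_inner_pencil hG hB lam u) (norm_nonneg _)
      _ ≤ ‖G‖ * (‖pencil G B lam u‖ * (‖R‖ * ‖y‖)) := by
          gcongr
          exact (Complex.re_le_norm _).trans ((norm_inner_le_norm _ _).trans (by gcongr))
      _ = ‖G‖ * ‖R‖ * ‖pencil G B lam u‖ * ‖y‖ := by ring
  exact le_mul_of_le_add_of_mul_sq_le hlam (norm_nonneg _) (by positivity) hlin hsq

theorem MaxDissipative.isRegularPoint [CompleteSpace H] (hG : G.IsPositive)
    (hmax : MaxDissipative B) {lam mu : ℂ} (hlam : 0 < lam.re) (hmu : IsRegularPoint G B mu) :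
    IsRegularPoint G B lam := by
  have ⟨R, hRl, hRr⟩ := hmu
  set K : H →L[ℂ] H := .id ℂ H + (lam - mu) • (G ∘L B.domain.subtypeL ∘L R)
  have hK (y : H) : K y = pencil G B lam (R y) := by
    rw [pencil_apply_eq_add lam mu, hRr]
    rfl
  refine hmu.of_isUnit_comp ?_ fun u => by rw [hK, hRl]
  rw [ContinuousLinearMap.isUnit_iff_bijective,
    ContinuousLinearMap.bijective_iff_dense_range_and_antilipschitz]
  constructor
  · rw [Submodule.topologicalClosure_eq_top_iff, Submodule.eq_bot_iff]
    refine fun v hv => hmax.eq_zero_of_forall_inner_pencil_eq_zero hG hlam hRr.surjective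
      fun u => hv _ ⟨pencil G B mu u, (hK _).trans (congrArg _ (hRl u))⟩
  · refine ⟨⟨2 + ‖lam - mu‖ ^ 2 * (‖G‖ * ‖R‖) / lam.re,
      add_nonneg zero_le_two (div_nonneg (by positivity) hlam.le)⟩,
      K.antilipschitz_of_bound fun y => ?_⟩
    rw [hK]
    exact norm_le_mul_norm_pencil hG hmax.1 hlam hRr y

end Pencil

section Transfer

variable {V W : Type*} [NormedAddCommGroup V] [InnerProductSpace ℂ V]
  [NormedAddCommGroup W] [InnerProductSpace ℂ W] {E Q : V →L[ℂ] W} {B : W →ₗ.[ℂ] W}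
  {Qi : W →L[ℂ] V}

open ContinuousLinearMap

theorem pencil_comp_apply_mk (hQiQ : ∀ x, Qi (Q x) = x) (lam : ℂ) {x : V}
    (hx : Q x ∈ B.domain) : pencil (E ∘L Qi) B lam ⟨Q x, hx⟩ = lam • E x - BQap Q B x := by
  rw [pencil_apply, BQap, dif_pos hx, ContinuousLinearMap.comp_apply, hQiQ]

theorem regAt_iff_isRegularPoint (hQiQ : ∀ x, Qi (Q x) = x) (hQQi : ∀ y, Q (Qi y) = y)
    (lam : ℂ) : RegAt E Q B lam ↔ IsRegularPoint (E ∘L Qi) B lam := by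
  have hmem (u : B.domain) : Q (Qi u) ∈ B.domain := (hQQi u).symm ▸ u.2
  have hmk (u : B.domain) : (⟨Q (Qi u), hmem u⟩ : B.domain) = u := Subtype.ext (hQQi u)
  constructor
  · rintro ⟨T, hTl, hTr⟩
    refine ⟨(Q ∘L T).codRestrict B.domain fun y => (hTr y).1, fun u => ?_, fun y => ?_⟩
    · have hu := pencil_comp_apply_mk (E := E) hQiQ lam (hmem u)
      rw [hmk] at hu
      apply Subtype.ext
      change Q (T (pencil (E ∘L Qi) B lam u)) = u
      rw [hu, hTl _ (hmem u), hQQi]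
    · exact (pencil_comp_apply_mk hQiQ lam _).trans (hTr y).2
  · rintro ⟨S, hSl, hSr⟩
    refine ⟨Qi ∘L B.domain.subtypeL ∘L S, fun x hx => ?_, fun y => ⟨hmem (S y), ?_⟩⟩
    · simp only [comp_apply, Submodule.subtypeL_apply]
      rw [← pencil_comp_apply_mk hQiQ lam hx, hSl, hQiQ]
    · change lam • E (Qi (S y)) - BQap Q B (Qi (S y)) = y
      rw [← pencil_comp_apply_mk hQiQ lam (hmem (S y)), hmk, hSr]

theorem isPositive_comp_of_isPositive_adjoint_comp [CompleteSpace V] [CompleteSpace W]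
    (hQE : (adjoint Q ∘L E).IsPositive) (hQQi : ∀ y, Q (Qi y) = y) :
    (E ∘L Qi).IsPositive := by
  have hid : Q ∘L Qi = .id ℂ W := ext hQQi
  have : E ∘L Qi = adjoint Qi ∘L (adjoint Q ∘L E) ∘L Qi := by
    rw [← comp_assoc, ← comp_assoc, ← adjoint_comp, hid, adjoint_id, id_comp]
  rw [this]
  exact hQE.adjoint_conj Qi

end Transfer

theorem stmt_17_general (E Q : X →L[ℂ] Y) (B : Y →ₗ.[ℂ] Y)
    (hQinv : ∃ Qi : Y →L[ℂ] X, (∀ x, Qi (Q x) = x) ∧ (∀ y, Q (Qi y) = y))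
    (hQE : IsSelfAdjoint ((ContinuousLinearMap.adjoint Q).comp E))
    (hQEnn : ∀ x : X, 0 ≤ (⟪((ContinuousLinearMap.adjoint Q).comp E) x, x⟫_ℂ).re)
    (hBdiss : Dissipative B) :
    (((∃ lam0 : ℂ, RegAt E Q B lam0) ∧ MaxDissipative B) ↔
      (∀ lam0 : ℂ, 0 < lam0.re → RegAt E Q B lam0)) ∧
    ((∀ lam0 : ℂ, 0 < lam0.re → RegAt E Q B lam0) ↔
      (∃ lam0 : ℂ, 0 < lam0.re ∧ RegAt E Q B lam0)) := by
  obtain ⟨Qi, hQiQ, hQQi⟩ := hQinv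
  have hG := isPositive_comp_of_isPositive_adjoint_comp
    (ContinuousLinearMap.isPositive_def'.mpr ⟨hQE, hQEnn⟩) hQQi
  simp only [regAt_iff_isRegularPoint hQiQ hQQi]
  have hmax {lam : ℂ} (hlam : 0 < lam.re) (h : IsRegularPoint (E ∘L Qi) B lam) :
      MaxDissipative B := by
    obtain ⟨S, -, hS⟩ := h
    exact maxDissipative_of_surjective_pencil hG hBdiss hlam hS.surjective
  refine ⟨⟨fun ⟨⟨mu, hmu⟩, hB⟩ lam hlam => hB.isRegularPoint hG hlam hmu, fun h => ?_⟩,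
    ⟨fun h => ⟨1, one_pos, h 1 one_pos⟩, fun ⟨mu, hmu, h⟩ lam hlam => ?_⟩⟩
  · exact ⟨⟨1, h 1 one_pos⟩, hmax one_pos (h 1 one_pos)⟩
  · exact (hmax hmu h).isRegularPoint hG hlam h

/-- For the dissipative Hamiltonian pencil `P(λ) = λE - BQ` the following are
equivalent: (a) some `λ0 ∈ ℂ` is a regular point and `B` is maximally dissipative;
(b) every `λ0` with `Re λ0 > 0` is a regular point; (c) some `λ0` with `Re λ0 > 0` is a
regular point. -/
theorem stmt_17 (E Q : X →L[ℂ] Y) (B : Y →ₗ.[ℂ] Y)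
    (hQinv : ∃ Qi : Y →L[ℂ] X, (∀ x, Qi (Q x) = x) ∧ (∀ y, Q (Qi y) = y))
    (hQE : IsSelfAdjoint ((ContinuousLinearMap.adjoint Q).comp E))
    (hQEnn : ∀ x : X, 0 ≤ (⟪((ContinuousLinearMap.adjoint Q).comp E) x, x⟫_ℂ).re)
    (hBdense : Dense (B.domain : Set Y)) (hBclosed : IsClosed (B.graph : Set (Y × Y)))
    (hBdiss : Dissipative B) :
    (((∃ lam0 : ℂ, RegAt E Q B lam0) ∧ MaxDissipative B) ↔
      (∀ lam0 : ℂ, 0 < lam0.re → RegAt E Q B lam0)) ∧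
    ((∀ lam0 : ℂ, 0 < lam0.re → RegAt E Q B lam0) ↔
      (∃ lam0 : ℂ, 0 < lam0.re ∧ RegAt E Q B lam0)) :=
  stmt_17_general E Q B hQinv hQE hQEnn hBdiss
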